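/- arXiv:1812.10475 — 2 statements merged into one kernel-verified Lean document; each statement's English description precedes it below -/
import Mathlib

section
/- For every n ≥ 0 and each j ∈ {1,…,d}: E[(Y_{1j}(n) − θ/2)²] = (θ/2)x_{n;θ} + λ(u_{n;θ} − (θ/2)x_{n;θ}), E[(Y_{2j}(n) − θ/2)²] = (θ/2)x_{n;θ} + λ(v_{n;θ} − (θ/2)x_{n;θ}), and E[(Y_{ij}(n) − (1−θ)/2)²] = ((1−θ)/2)x_{n;1−θ} + λ(w_{n;1−θ} − ((1−θ)/2)x_{n;1−θ}) for i = 3, 4. -/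
open Finset Filter

namespace Broadcast

/-- The root distribution `π = (θ/2, θ/2, (1-θ)/2, (1-θ)/2)`. -/
noncomputable def rootDist (θ : ℝ) (i : Fin 4) : ℝ :=
  if (i : ℕ) < 2 then θ / 2 else (1 - θ) / 2

/-- The transition matrix `P i j = λ · 1{i=j} + (1-λ) π_j`. -/
noncomputable def trans (θ lam : ℝ) (i j : Fin 4) : ℝ :=
  (if i = j then lam else 0) + (1 - lam) * rootDist θ j

/-- Vertices at level `n` of the infinite rooted `d`-ary tree, encoded as paths. -/
abbrev Vtx (d n : ℕ) := Fin n → Fin d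

/-- Configurations (assignments of states) on level `n`. -/
abbrev Config (d n : ℕ) := Vtx d n → Fin 4

/-- Restriction of a level-`(n+1)` configuration to the subtree of the `j`-th child
of the root. -/
def restrict {d n : ℕ} (j : Fin d) (A : Config d (n + 1)) : Config d n :=
  fun p => A (Fin.cons j p)

/-- `lik θ λ d n i A` is the probability of observing the configuration `A` on level `n`,
given that the root is in state `i` (the broadcasting process). -/
noncomputable def lik (θ lam : ℝ) (d : ℕ) : (n : ℕ) → Fin 4 → Config d n → ℝ
  | 0, i, A => if A Fin.elim0 = i then 1 else 0
  | n + 1, i, A =>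
      ∏ j : Fin d, ∑ k : Fin 4, trans θ lam i k * lik θ lam d n k (restrict j A)

/-- Unconditional probability of observing the configuration `A` on level `n`. -/
noncomputable def marg (θ lam : ℝ) (d n : ℕ) (A : Config d n) : ℝ :=
  ∑ i : Fin 4, rootDist θ i * lik θ lam d n i A

/-- The posterior `f_n(i, A) = P(σ_ρ = i ∣ σ(n) = A)`. -/
noncomputable def post (θ lam : ℝ) (d n : ℕ) (i : Fin 4) (A : Config d n) : ℝ :=
  rootDist θ i * lik θ lam d n i A / marg θ lam d n A

/-- Expectation of `g(σ(n))` conditioned on the root being in state `r`,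
i.e. `E g(σ^r(n))`. -/
noncomputable def condE (θ lam : ℝ) (d n : ℕ) (r : Fin 4) (g : Config d n → ℝ) : ℝ :=
  ∑ A : Config d n, lik θ lam d n r A * g A

/-- Unconditional expectation of `g(σ(n))`. -/
noncomputable def uncondE (θ lam : ℝ) (d n : ℕ) (g : Config d n → ℝ) : ℝ :=
  ∑ A : Config d n, marg θ lam d n A * g A

/-- `x_{n;θ} = E f_n(1, σ¹(n)) - θ/2`. -/
noncomputable def xT (θ lam : ℝ) (d n : ℕ) : ℝ :=
  condE θ lam d n 0 (fun A => post θ lam d n 0 A) - θ / 2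

/-- `y_{n;θ} = E f_n(2, σ¹(n)) - θ/2`. -/
noncomputable def yT (θ lam : ℝ) (d n : ℕ) : ℝ :=
  condE θ lam d n 0 (fun A => post θ lam d n 1 A) - θ / 2

/-- `z_{n;θ} = E f_n(1, σ³(n)) - θ/2`. -/
noncomputable def zT (θ lam : ℝ) (d n : ℕ) : ℝ :=
  condE θ lam d n 2 (fun A => post θ lam d n 0 A) - θ / 2

/-- `x_{n;1-θ} = E f_n(3, σ³(n)) - (1-θ)/2`. -/
noncomputable def xH (θ lam : ℝ) (d n : ℕ) : ℝ :=
  condE θ lam d n 2 (fun A => post θ lam d n 2 A) - (1 - θ) / 2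

/-- `y_{n;1-θ} = E f_n(4, σ³(n)) - (1-θ)/2`. -/
noncomputable def yH (θ lam : ℝ) (d n : ℕ) : ℝ :=
  condE θ lam d n 2 (fun A => post θ lam d n 3 A) - (1 - θ) / 2

/-- `z_{n;1-θ} = E f_n(3, σ¹(n)) - (1-θ)/2`. -/
noncomputable def zH (θ lam : ℝ) (d n : ℕ) : ℝ :=
  condE θ lam d n 0 (fun A => post θ lam d n 2 A) - (1 - θ) / 2

/-- `u_{n;θ} = E (f_n(1, σ¹(n)) - θ/2)²`. -/
noncomputable def uT (θ lam : ℝ) (d n : ℕ) : ℝ :=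
  condE θ lam d n 0 (fun A => (post θ lam d n 0 A - θ / 2) ^ 2)

/-- `v_{n;θ} = E (f_n(2, σ¹(n)) - θ/2)²`. -/
noncomputable def vT (θ lam : ℝ) (d n : ℕ) : ℝ :=
  condE θ lam d n 0 (fun A => (post θ lam d n 1 A - θ / 2) ^ 2)

/-- `w_{n;θ} = E (f_n(1, σ³(n)) - θ/2)²`. -/
noncomputable def wT (θ lam : ℝ) (d n : ℕ) : ℝ :=
  condE θ lam d n 2 (fun A => (post θ lam d n 0 A - θ / 2) ^ 2)

/-- `w_{n;1-θ} = E (f_n(3, σ¹(n)) - (1-θ)/2)²`. -/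
noncomputable def wH (θ lam : ℝ) (d n : ℕ) : ℝ :=
  condE θ lam d n 0 (fun A => (post θ lam d n 2 A - (1 - θ) / 2) ^ 2)

/-- `Y_{ij}(n) = f_n(i, σ_j(n+1))`, viewed as a function of the level-`(n+1)`
configuration. -/
noncomputable def Yf (θ lam : ℝ) (d n : ℕ) (i : Fin 4) (j : Fin d)
    (A : Config d (n + 1)) : ℝ :=
  post θ lam d n i (restrict j A)

/-- `Z_i(n)`, viewed as a function of the level-`(n+1)` configuration. -/
noncomputable def Zf (θ lam : ℝ) (d n : ℕ) (i : Fin 4) (A : Config d (n + 1)) : ℝ :=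
  if (i : ℕ) < 2 then
    ∏ j : Fin d, (1 + (2 * lam / θ) * (Yf θ lam d n i j A - θ / 2))
  else
    ∏ j : Fin d, (1 + (2 * lam / (1 - θ)) * (Yf θ lam d n i j A - (1 - θ) / 2))

/-- `S = (θ/2)Z₁ + (θ/2)Z₂ + ((1-θ)/2)Z₃ + ((1-θ)/2)Z₄`. -/
noncomputable def Sf (θ lam : ℝ) (d n : ℕ) (A : Config d (n + 1)) : ℝ :=
  θ / 2 * Zf θ lam d n 0 A + θ / 2 * Zf θ lam d n 1 A
    + (1 - θ) / 2 * Zf θ lam d n 2 A + (1 - θ) / 2 * Zf θ lam d n 3 A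

/-- Total variation distance between the laws of `σ^i(n)` and `σ^j(n)`. -/
noncomputable def dTV (θ lam : ℝ) (d n : ℕ) (i j : Fin 4) : ℝ :=
  (∑ A : Config d n, |lik θ lam d n i A - lik θ lam d n j A|) / 2

/-- The model is reconstructible if for some pair of root states the total variation
distance between the conditioned level-`n` configurations does not vanish. -/
def Reconstructible (θ lam : ℝ) (d : ℕ) : Prop :=
  ∃ i j : Fin 4, 0 < Filter.limsup (fun n => dTV θ lam d n i j) Filter.atTop

/-- Probability that the root is in state `i` and the states at the vertices
`v 1, …, v k ∈ L(M)` are `c 1, …, c k`. -/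
noncomputable def jointRootEvent (θ lam : ℝ) (d M k : ℕ) (v : Fin k → Vtx d M)
    (c : Fin k → Fin 4) (i : Fin 4) : ℝ :=
  ∑ A : Config d M,
    if ∀ t, A (v t) = c t then rootDist θ i * lik θ lam d M i A else 0

/-- Conditional probability `P(σ_ρ = i ∣ σ_{v t} = c t, 1 ≤ t ≤ k)`. -/
noncomputable def condRoot (θ lam : ℝ) (d M k : ℕ) (v : Fin k → Vtx d M)
    (c : Fin k → Fin 4) (i : Fin 4) : ℝ :=
  jointRootEvent θ lam d M k v c i / ∑ i' : Fin 4, jointRootEvent θ lam d M k v c i'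

/-!
Conditioned on `σ_ρ = 1`, the child `u_j` is in state `k` with probability
`P₁ₖ = λ·1{k=1} + (1-λ)π_k`, so every functional `g` of `σ_j(n+1)` has expectation
`λ·E g(σ¹(n)) + (1-λ)·E g(σ(n))`. For `g = (f_n(i,·) - π_i)²` the unconditional term is
computed by Bayes' rule `E[f_n(i,σ(n)) h(σ(n))] = π_i E h(σⁱ(n))`, which gives
`E(f_n(i,σ(n)) - π_i)² = π_i (E f_n(i,σⁱ(n)) - π_i)`. Finally the transpositions `(1 2)` and
`(3 4)` preserve `π` and `P`, hence the law of the process, and identify the moments for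
`i = 2, 4` with those for `i = 1, 3`.
-/

section

variable {θ lam : ℝ} {d : ℕ}

theorem rootDist_nonneg (hθ : θ ∈ Set.Icc (0 : ℝ) 1) (i : Fin 4) : 0 ≤ rootDist θ i := by
  unfold rootDist
  split <;> linarith [hθ.1, hθ.2]

theorem sum_rootDist : ∑ i : Fin 4, rootDist θ i = 1 := by
  simp only [Fin.sum_univ_four, rootDist]
  norm_num
  ring

theorem sum_trans_mul (r : Fin 4) (c : Fin 4 → ℝ) :
    ∑ k : Fin 4, trans θ lam r k * c k
      = lam * c r + (1 - lam) * ∑ k : Fin 4, rootDist θ k * c k := by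
  simp only [trans, add_mul, ite_mul, zero_mul, Finset.sum_add_distrib, Finset.sum_ite_eq,
    Finset.mem_univ, if_true, Finset.mul_sum, mul_assoc]

theorem sum_trans (r : Fin 4) : ∑ k : Fin 4, trans θ lam r k = 1 := by
  simpa [sum_rootDist] using sum_trans_mul (θ := θ) (lam := lam) r (fun _ => 1)

theorem lik_succ {n : ℕ} (i : Fin 4) (A : Config d (n + 1)) :
    lik θ lam d (n + 1) i A
      = ∏ j : Fin d, ∑ k : Fin 4, trans θ lam i k * lik θ lam d n k (restrict j A) :=
  rfl

theorem lik_nonneg (hP : ∀ i j : Fin 4, 0 ≤ trans θ lam i j) :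
    ∀ (n : ℕ) (i : Fin 4) (A : Config d n), 0 ≤ lik θ lam d n i A
  | 0, i, A => by
    unfold lik
    split <;> norm_num
  | n + 1, i, A =>
    Finset.prod_nonneg fun _ _ => Finset.sum_nonneg fun k _ =>
      mul_nonneg (hP i k) (lik_nonneg hP n k _)

def configSuccEquiv (d n : ℕ) : Config d (n + 1) ≃ (Fin d → Config d n) where
  toFun A j := restrict j A
  invFun B q := B (q 0) (Fin.tail q)
  left_inv A := by
    funext q
    simp [restrict, Fin.cons_self_tail]
  right_inv B := by
    funext j p
    simp [restrict]

theorem sum_prod_restrict {n : ℕ} (F : Fin d → Config d n → ℝ) :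
    ∑ A : Config d (n + 1), ∏ j : Fin d, F j (restrict j A)
      = ∏ j : Fin d, ∑ B : Config d n, F j B := by
  rw [Finset.prod_univ_sum, Fintype.piFinset_univ]
  exact Fintype.sum_equiv (configSuccEquiv d n) _ _ fun A => rfl

theorem sum_sum_trans_mul {α : Type*} [Fintype α] (r : Fin 4) (f : Fin 4 → α → ℝ)
    (hf : ∀ k, ∑ B, f k B = 1) : ∑ B, ∑ k : Fin 4, trans θ lam r k * f k B = 1 := by
  rw [Finset.sum_comm]
  simp_rw [← Finset.mul_sum, hf, mul_one]
  exact sum_trans r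

theorem sum_lik : ∀ (n : ℕ) (i : Fin 4), ∑ A : Config d n, lik θ lam d n i A = 1
  | 0, i => by
    rw [← (Equiv.funUnique (Vtx d 0) (Fin 4)).symm.sum_comp]
    simp [lik, Subsingleton.elim (Fin.elim0 : Vtx d 0) default]
  | n + 1, i => by
    simp_rw [lik_succ]
    rw [sum_prod_restrict (fun _ B => ∑ k : Fin 4, trans θ lam i k * lik θ lam d n k B)]
    exact Finset.prod_eq_one fun _ _ => sum_sum_trans_mul i _ (sum_lik n)

theorem condE_comp_restrict {n : ℕ} (r : Fin 4) (j : Fin d) (g : Config d n → ℝ) :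
    condE θ lam d (n + 1) r (fun A => g (restrict j A))
      = ∑ k : Fin 4, trans θ lam r k * condE θ lam d n k g := by
  set F : Fin d → Config d n → ℝ := fun j' B =>
    (∑ k : Fin 4, trans θ lam r k * lik θ lam d n k B) * if j' = j then g B else 1
  have hF : ∀ A, lik θ lam d (n + 1) r A * g (restrict j A) = ∏ j', F j' (restrict j' A) := by
    intro A
    simp only [F, Finset.prod_mul_distrib, Finset.prod_ite_eq', Finset.mem_univ, if_true,
      lik_succ]
  have hother : ∀ j' ≠ j, ∑ B, F j' B = 1 := by
    intro j' hj'
    simpa [F, hj'] using sum_sum_trans_mul (θ := θ) (lam := lam) r _ (sum_lik n)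
  unfold condE
  rw [Finset.sum_congr rfl fun A _ => hF A, sum_prod_restrict, Fintype.prod_eq_single j hother]
  simp only [F, if_true, Finset.sum_mul, Finset.mul_sum, mul_assoc]
  exact Finset.sum_comm

theorem uncondE_eq_sum_condE {n : ℕ} (g : Config d n → ℝ) :
    uncondE θ lam d n g = ∑ i : Fin 4, rootDist θ i * condE θ lam d n i g := by
  simp only [uncondE, marg, condE, Finset.sum_mul, Finset.mul_sum, mul_assoc]
  exact Finset.sum_comm

theorem condE_const {n : ℕ} (i : Fin 4) (c : ℝ) : condE θ lam d n i (fun _ => c) = c := by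
  simp only [condE, ← Finset.sum_mul, sum_lik, one_mul]

theorem condE_sub_const {n : ℕ} (i : Fin 4) (f : Config d n → ℝ) (c : ℝ) :
    condE θ lam d n i (fun A => f A - c) = condE θ lam d n i f - c := by
  simp only [condE, mul_sub, Finset.sum_sub_distrib]
  exact congrArg _ (condE_const i c)

theorem uncondE_const {n : ℕ} (c : ℝ) : uncondE θ lam d n (fun _ => c) = c := by
  simp only [uncondE_eq_sum_condE, condE_const, ← Finset.sum_mul, sum_rootDist, one_mul]

theorem marg_mul_post (hθ : θ ∈ Set.Icc (0 : ℝ) 1)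
    (hP : ∀ i j : Fin 4, 0 ≤ trans θ lam i j) {n : ℕ} (i : Fin 4) (A : Config d n) :
    marg θ lam d n A * post θ lam d n i A = rootDist θ i * lik θ lam d n i A := by
  by_cases h : marg θ lam d n A = 0
  · -- nonnegativity makes each `π_k · lik_k A` vanish, so the junk value `post = 0` is harmless
    have hterm := (Finset.sum_eq_zero_iff_of_nonneg fun k _ =>
      mul_nonneg (rootDist_nonneg hθ k) (lik_nonneg hP n k A)).mp h i (Finset.mem_univ i)
    rw [h, zero_mul, hterm]
  · exact mul_div_cancel₀ _ h

theorem uncondE_post_mul (hθ : θ ∈ Set.Icc (0 : ℝ) 1)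
    (hP : ∀ i j : Fin 4, 0 ≤ trans θ lam i j) {n : ℕ} (i : Fin 4) (g : Config d n → ℝ) :
    uncondE θ lam d n (fun A => post θ lam d n i A * g A)
      = rootDist θ i * condE θ lam d n i g := by
  simp only [uncondE, condE, ← mul_assoc, marg_mul_post hθ hP, Finset.mul_sum]

theorem uncondE_sq_post_sub (hθ : θ ∈ Set.Icc (0 : ℝ) 1)
    (hP : ∀ i j : Fin 4, 0 ≤ trans θ lam i j) {n : ℕ} (i : Fin 4) :
    uncondE θ lam d n (fun A => (post θ lam d n i A - rootDist θ i) ^ 2)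
      = rootDist θ i * (condE θ lam d n i (post θ lam d n i) - rootDist θ i) := by
  set c := rootDist θ i
  set p := post θ lam d n i
  calc uncondE θ lam d n (fun A => (p A - c) ^ 2)
      = uncondE θ lam d n (fun A => p A * (p A - c)) - c * uncondE θ lam d n (fun A => p A * 1)
          + c * uncondE θ lam d n (fun _ => c) := by
        simp only [uncondE, Finset.mul_sum, ← Finset.sum_sub_distrib, ← Finset.sum_add_distrib]
        exact Finset.sum_congr rfl fun A _ => by ring
    _ = c * condE θ lam d n i (fun A => p A - c) - c * (c * condE θ lam d n i (fun _ => 1))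
          + c * c := by
        rw [uncondE_post_mul hθ hP, uncondE_post_mul hθ hP, uncondE_const]
    _ = c * (condE θ lam d n i p - c) := by
        rw [condE_sub_const, condE_const]
        ring

theorem condE_sq_Yf_sub (hθ : θ ∈ Set.Icc (0 : ℝ) 1)
    (hP : ∀ i j : Fin 4, 0 ≤ trans θ lam i j) {n : ℕ} (r i : Fin 4) (j : Fin d) {c : ℝ}
    (hc : rootDist θ i = c) :
    condE θ lam d (n + 1) r (fun A => (Yf θ lam d n i j A - c) ^ 2)
      = lam * condE θ lam d n r (fun B => (post θ lam d n i B - c) ^ 2)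
        + (1 - lam) * (c * (condE θ lam d n i (post θ lam d n i) - c)) := by
  subst hc
  refine (condE_comp_restrict r j (fun B => (post θ lam d n i B - rootDist θ i) ^ 2)).trans ?_
  rw [sum_trans_mul, ← uncondE_eq_sum_condE, uncondE_sq_post_sub hθ hP]

section Relabel

variable (s : Equiv.Perm (Fin 4))

theorem trans_relabel (hs : ∀ i, rootDist θ (s i) = rootDist θ i) (i k : Fin 4) :
    trans θ lam (s i) (s k) = trans θ lam i k := by
  simp only [trans, hs, s.apply_eq_iff_eq]

theorem lik_relabel (hs : ∀ i, rootDist θ (s i) = rootDist θ i) :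
    ∀ (n : ℕ) (i : Fin 4) (A : Config d n), lik θ lam d n (s i) (s ∘ A) = lik θ lam d n i A
  | 0, i, A => by
    simp only [lik, Function.comp_apply, s.apply_eq_iff_eq]
  | n + 1, i, A => by
    simp only [lik_succ]
    refine Finset.prod_congr rfl fun j _ => ?_
    rw [← Equiv.sum_comp s]
    exact Finset.sum_congr rfl fun k _ => by
      rw [trans_relabel s hs, show restrict j (s ∘ A) = s ∘ restrict j A from rfl,
        lik_relabel hs n k (restrict j A)]

theorem marg_relabel (hs : ∀ i, rootDist θ (s i) = rootDist θ i) {n : ℕ} (A : Config d n) :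
    marg θ lam d n (s ∘ A) = marg θ lam d n A := by
  unfold marg
  rw [← Equiv.sum_comp s]
  simp only [hs, lik_relabel s hs]

theorem post_relabel (hs : ∀ i, rootDist θ (s i) = rootDist θ i) {n : ℕ} (i : Fin 4)
    (A : Config d n) : post θ lam d n (s i) (s ∘ A) = post θ lam d n i A := by
  simp only [post, hs, lik_relabel s hs, marg_relabel s hs]

theorem condE_relabel (hs : ∀ i, rootDist θ (s i) = rootDist θ i) {n : ℕ} (r : Fin 4)
    (g : Config d n → ℝ) :
    condE θ lam d n (s r) g = condE θ lam d n r (fun A => g (s ∘ A)) := by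
  unfold condE
  rw [← (Equiv.arrowCongr (Equiv.refl (Vtx d n)) s).sum_comp]
  exact Finset.sum_congr rfl fun A _ => by
    rw [show Equiv.arrowCongr (Equiv.refl (Vtx d n)) s A = s ∘ A from rfl, lik_relabel s hs]

theorem condE_comp_post_relabel (hs : ∀ i, rootDist θ (s i) = rootDist θ i)
    {n : ℕ} (r i : Fin 4) (h : ℝ → ℝ) :
    condE θ lam d n (s r) (fun A => h (post θ lam d n (s i) A))
      = condE θ lam d n r (fun A => h (post θ lam d n i A)) := by
  simp only [condE_relabel s hs r, post_relabel s hs]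

end Relabel

end

theorem Y_second_moments_general (θ lam : ℝ) (hθ : θ ∈ Set.Ioo (0 : ℝ) 1)
    (hP : ∀ i j : Fin 4, 0 ≤ trans θ lam i j) (d : ℕ) (n : ℕ) :
    ∀ j : Fin d,
      condE θ lam d (n + 1) 0 (fun A => (Yf θ lam d n 0 j A - θ / 2) ^ 2)
          = θ / 2 * xT θ lam d n + lam * (uT θ lam d n - θ / 2 * xT θ lam d n) ∧
      condE θ lam d (n + 1) 0 (fun A => (Yf θ lam d n 1 j A - θ / 2) ^ 2)
          = θ / 2 * xT θ lam d n + lam * (vT θ lam d n - θ / 2 * xT θ lam d n) ∧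
      ∀ i : Fin 4, 2 ≤ (i : ℕ) →
        condE θ lam d (n + 1) 0 (fun A => (Yf θ lam d n i j A - (1 - θ) / 2) ^ 2)
          = (1 - θ) / 2 * xH θ lam d n
            + lam * (wH θ lam d n - (1 - θ) / 2 * xH θ lam d n) := by
  intro j
  have hθ' := Set.Ioo_subset_Icc_self hθ
  have hmean1 : condE θ lam d n 1 (post θ lam d n 1) = condE θ lam d n 0 (post θ lam d n 0) :=
    condE_comp_post_relabel (Equiv.swap 0 1) (Equiv.apply_swap_eq_self rfl) 0 0 id
  have hmean3 : condE θ lam d n 3 (post θ lam d n 3) = condE θ lam d n 2 (post θ lam d n 2) :=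
    condE_comp_post_relabel (Equiv.swap 2 3) (Equiv.apply_swap_eq_self rfl) 2 2 id
  have hsq3 : condE θ lam d n 0 (fun B => (post θ lam d n 3 B - (1 - θ) / 2) ^ 2)
      = condE θ lam d n 0 (fun B => (post θ lam d n 2 B - (1 - θ) / 2) ^ 2) :=
    condE_comp_post_relabel (Equiv.swap 2 3) (Equiv.apply_swap_eq_self rfl) 0 2
      (fun p => (p - (1 - θ) / 2) ^ 2)
  refine ⟨?_, ?_, fun i hi => ?_⟩
  · rw [condE_sq_Yf_sub (c := θ / 2) hθ' hP 0 0 j rfl, xT, uT]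
    ring
  · rw [condE_sq_Yf_sub (c := θ / 2) hθ' hP 0 1 j rfl, hmean1, xT, vT]
    ring
  · obtain rfl | rfl : i = 2 ∨ i = 3 := by omega
    · rw [condE_sq_Yf_sub (c := (1 - θ) / 2) hθ' hP 0 2 j rfl, xH, wH]
      ring
    · rw [condE_sq_Yf_sub (c := (1 - θ) / 2) hθ' hP 0 3 j rfl, hmean3, hsq3, xH, wH]
      ring

/-- Second moments of `Y_{ij}(n)`:
`E(Y_{1j}-θ/2)² = (θ/2)x_{n;θ} + λ(u_{n;θ}-(θ/2)x_{n;θ})`,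
`E(Y_{2j}-θ/2)² = (θ/2)x_{n;θ} + λ(v_{n;θ}-(θ/2)x_{n;θ})`, and
`E(Y_{ij}-(1-θ)/2)² = ((1-θ)/2)x_{n;1-θ} + λ(w_{n;1-θ}-((1-θ)/2)x_{n;1-θ})` for `i = 3, 4`. -/
theorem Y_second_moments (θ lam : ℝ) (hθ : θ ∈ Set.Ioo (0 : ℝ) 1) (hlam : |lam| ≤ 1)
    (hP : ∀ i j : Fin 4, 0 ≤ trans θ lam i j) (d : ℕ) (hd : 2 ≤ d) (n : ℕ) :
    ∀ j : Fin d,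
      condE θ lam d (n + 1) 0 (fun A => (Yf θ lam d n 0 j A - θ / 2) ^ 2)
          = θ / 2 * xT θ lam d n + lam * (uT θ lam d n - θ / 2 * xT θ lam d n) ∧
      condE θ lam d (n + 1) 0 (fun A => (Yf θ lam d n 1 j A - θ / 2) ^ 2)
          = θ / 2 * xT θ lam d n + lam * (vT θ lam d n - θ / 2 * xT θ lam d n) ∧
      ∀ i : Fin 4, 2 ≤ (i : ℕ) →
        condE θ lam d (n + 1) 0 (fun A => (Yf θ lam d n i j A - (1 - θ) / 2) ^ 2)
          = (1 - θ) / 2 * xH θ lam d n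
            + lam * (wH θ lam d n - (1 - θ) / 2 * xH θ lam d n) :=
  Y_second_moments_general θ lam hθ hP d n

end Broadcast
end

section
/- For every n ≥ 0: E[Z₁(n)·Z₂(n)] = E[Z₂(n)²]. -/
open Finset Filter

namespace Broadcast

/-! The law of a child subtree under root state `0` has density `zFactor 0` with respect to the
marginal law `marg`, and `zFactor 1` is the image of `zFactor 0` under the state swap `0 ↔ 1`,
which preserves `marg`. Since the children are independent given the root, the claim reduces to
one child, where `E[Z₁ Z₂] - E[Z₂²]` becomes `∑ marg · a₀ a₁ (a₀ - a₁)` with `aᵢ = zFactor i`: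
a sum that the swap turns into its negative. -/

/-- The factor `1 + (2λ/θ)(f_n(i+1, B) - θ/2)` of `Z_{i+1}(n)` (states are indexed from `0`). -/
noncomputable def zFactor (θ lam : ℝ) (d n : ℕ) (i : Fin 4) (B : Config d n) : ℝ :=
  1 + 2 * lam / θ * (post θ lam d n i B - θ / 2)

/-- The law of the level-`n` configuration below a child of a root in state `r`. -/
noncomputable def childLaw (θ lam : ℝ) (d n : ℕ) (r : Fin 4) (B : Config d n) : ℝ :=
  ∑ k, trans θ lam r k * lik θ lam d n k B

section Symmetry

variable {θ lam : ℝ} (τ : Equiv.Perm (Fin 4)) (hτ : ∀ i, rootDist θ (τ i) = rootDist θ i)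
include hτ

lemma trans_perm (i j : Fin 4) : trans θ lam (τ i) (τ j) = trans θ lam i j := by
  simp only [trans, hτ, τ.injective.eq_iff]

lemma lik_perm {d : ℕ} : ∀ (n : ℕ) (i : Fin 4) (A : Config d n),
    lik θ lam d n (τ i) (τ ∘ A) = lik θ lam d n i A
  | 0, i, A => by simp only [lik, Function.comp_apply, τ.injective.eq_iff]
  | n + 1, i, A => by
    refine prod_congr rfl fun j _ => ?_
    rw [← Equiv.sum_comp τ]
    exact sum_congr rfl fun k _ => by
      rw [trans_perm τ hτ]
      exact congrArg _ (lik_perm n k (restrict j A))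

lemma marg_perm {d n : ℕ} (A : Config d n) : marg θ lam d n (τ ∘ A) = marg θ lam d n A := by
  rw [marg, ← Equiv.sum_comp τ]
  simp only [hτ, lik_perm τ hτ, marg]

lemma zFactor_perm {d n : ℕ} (i : Fin 4) (A : Config d n) :
    zFactor θ lam d n (τ i) (τ ∘ A) = zFactor θ lam d n i A := by
  simp only [zFactor, post, hτ, lik_perm τ hτ, marg_perm τ hτ]

end Symmetry

lemma rootDist_swap_zero_one (θ : ℝ) (i : Fin 4) :
    rootDist θ (Equiv.swap 0 1 i) = rootDist θ i := by
  fin_cases i <;> rfl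

def childrenEquiv (d n : ℕ) : (Fin d → Config d n) ≃ Config d (n + 1) where
  toFun g v := g (v 0) (Fin.tail v)
  invFun A j := restrict j A
  left_inv g := by
    funext j p
    simp [restrict, Fin.tail_cons]
  right_inv A := by
    funext v
    simp only [restrict, Fin.cons_self_tail]

lemma condE_prod_restrict (θ lam : ℝ) (d n : ℕ) (r : Fin 4) (f : Config d n → ℝ) :
    condE θ lam d (n + 1) r (fun A => ∏ j, f (restrict j A))
      = (∑ B, childLaw θ lam d n r B * f B) ^ d := by
  rw [← Fin.prod_const, prod_univ_sum, Fintype.piFinset_univ, condE,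
    ← (childrenEquiv d n).sum_comp]
  simp only [lik, ← prod_mul_distrib]
  rfl

lemma Zf_eq_prod_zFactor (θ lam : ℝ) (d n : ℕ) {i : Fin 4} (hi : (i : ℕ) < 2)
    (A : Config d (n + 1)) : Zf θ lam d n i A = ∏ j, zFactor θ lam d n i (restrict j A) := by
  simp only [Zf, Yf, zFactor, if_pos hi]

lemma childLaw_eq (θ lam : ℝ) (d n : ℕ) (r : Fin 4) (B : Config d n) :
    childLaw θ lam d n r B = lam * lik θ lam d n r B + (1 - lam) * marg θ lam d n B := by
  simp only [childLaw, trans, marg, add_mul, sum_add_distrib, ite_mul, zero_mul, sum_ite_eq,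
    mem_univ, if_true, mul_sum, mul_assoc]

lemma childLaw_eq_marg_mul_zFactor {θ : ℝ} (lam : ℝ) (hθ : θ ≠ 0) {d n : ℕ} {i : Fin 4}
    (hi : rootDist θ i = θ / 2) {B : Config d n} (hB : marg θ lam d n B ≠ 0) :
    childLaw θ lam d n i B = marg θ lam d n B * zFactor θ lam d n i B := by
  rw [childLaw_eq, zFactor, post, hi]
  field_simp
  ring

lemma zFactor_eq_of_marg_eq_zero {θ lam : ℝ} {d n : ℕ} (i j : Fin 4) {B : Config d n}
    (hB : marg θ lam d n B = 0) : zFactor θ lam d n i B = zFactor θ lam d n j B := by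
  simp only [zFactor, post, hB, div_zero]

lemma sum_marg_zFactor_antisymm (θ lam : ℝ) (d n : ℕ) :
    ∑ B : Config d n, marg θ lam d n B * (zFactor θ lam d n 0 B * zFactor θ lam d n 1 B
      * (zFactor θ lam d n 0 B - zFactor θ lam d n 1 B)) = 0 := by
  have hτ := rootDist_swap_zero_one θ
  set e := Equiv.arrowCongr (Equiv.refl (Vtx d n)) (Equiv.swap (0 : Fin 4) 1)
  have he : ∀ B, e B = Equiv.swap 0 1 ∘ B := fun _ => rfl
  refine eq_zero_of_neg_eq <| Eq.trans ?_ (e.sum_comp _)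
  rw [← sum_neg_distrib]
  refine sum_congr rfl fun B _ => ?_
  have h0 := zFactor_perm (lam := lam) _ hτ 0 B
  have h1 := zFactor_perm (lam := lam) _ hτ 1 B
  rw [Equiv.swap_apply_left] at h0
  rw [Equiv.swap_apply_right] at h1
  rw [he, marg_perm _ hτ, h0, h1]
  ring

lemma sum_childLaw_zFactor_mul_eq_sq (θ lam : ℝ) (hθ : θ ≠ 0) (d n : ℕ) :
    ∑ B : Config d n, childLaw θ lam d n 0 B * (zFactor θ lam d n 0 B * zFactor θ lam d n 1 B)
      = ∑ B : Config d n, childLaw θ lam d n 0 B * zFactor θ lam d n 1 B ^ 2 := by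
  rw [← sub_eq_zero, ← sum_sub_distrib, ← sum_marg_zFactor_antisymm θ lam d n]
  refine sum_congr rfl fun B _ => ?_
  by_cases hB : marg θ lam d n B = 0
  · rw [zFactor_eq_of_marg_eq_zero 0 1 hB]
    ring
  · rw [childLaw_eq_marg_mul_zFactor lam hθ rfl hB]
    ring

theorem Z1Z2_eq_Z2sq_general (θ lam : ℝ) (hθ : θ ∈ Set.Ioo (0 : ℝ) 1) (d : ℕ) (n : ℕ) :
    condE θ lam d (n + 1) 0 (fun A => Zf θ lam d n 0 A * Zf θ lam d n 1 A)
      = condE θ lam d (n + 1) 0 (fun A => Zf θ lam d n 1 A ^ 2) := by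
  simp only [Zf_eq_prod_zFactor θ lam d n (show ((0 : Fin 4) : ℕ) < 2 by decide),
    Zf_eq_prod_zFactor θ lam d n (show ((1 : Fin 4) : ℕ) < 2 by decide),
    ← prod_mul_distrib, ← prod_pow]
  convert congrArg (· ^ d) (sum_childLaw_zFactor_mul_eq_sq θ lam hθ.1.ne' d n) using 1
  · exact condE_prod_restrict θ lam d n 0 fun B => zFactor θ lam d n 0 B * zFactor θ lam d n 1 B
  · exact condE_prod_restrict θ lam d n 0 fun B => zFactor θ lam d n 1 B ^ 2

/-- `E(Z₁(n)Z₂(n)) = E(Z₂(n)²)`. -/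
theorem Z1Z2_eq_Z2sq (θ lam : ℝ) (hθ : θ ∈ Set.Ioo (0 : ℝ) 1) (hlam : |lam| ≤ 1)
    (hP : ∀ i j : Fin 4, 0 ≤ trans θ lam i j) (d : ℕ) (hd : 2 ≤ d) (n : ℕ) :
    condE θ lam d (n + 1) 0 (fun A => Zf θ lam d n 0 A * Zf θ lam d n 1 A)
      = condE θ lam d (n + 1) 0 (fun A => Zf θ lam d n 1 A ^ 2) :=
  Z1Z2_eq_Z2sq_general θ lam hθ d n

end Broadcast
end
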